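/- If t is a winning strategy for the game G²_Φ associated with the arithmetical formula Φ ≡ ∃^N x₁ ∀^N y₁ … ∃^N x_h ∀^N y_h (f(x⃗,y⃗)=0), then t universally realizes Φ. -/

import Mathlib

mutual
  /-- Terms of the λc-calculus (de Bruijn indices for λ-variables):
  variables, abstraction, application, continuation constants `k_π`, and
  instructions `κ ∈ C` (with `instr 0` playing the role of `cc`). -/
  inductive Term : Type
    | var : ℕ → Term
    | lam : Term → Term
    | app : Term → Term → Term
    | cont : Stack → Term
    | instr : ℕ → Term

  /-- Stacks of the λc-calculus: stack constants `α ∈ B` and push `t·π`. -/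
  inductive Stack : Type
    | sconst : ℕ → Stack
    | cons : Term → Stack → Stack
end

/-- The instruction `cc` (call/cc). -/
def cc : Term := .instr 0

/-- Substitution `t{x := u}` of the λ-variable of de Bruijn index `n` by the
(closed) term `u`; it does not propagate through continuation constants. -/
def Term.subst : Term → ℕ → Term → Term
  | .var m, n, u => if m = n then u else if n < m then .var (m - 1) else .var m
  | .lam t, n, u => .lam (t.subst (n + 1) u)
  | .app t₁ t₂, n, u => .app (t₁.subst n u) (t₂.subst n u)
  | .cont π, _, _ => .cont π
  | .instr k, _, _ => .instr k

/-- One-step evaluation of the Krivine Abstract Machine: the union of the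
four rules (Push), (Grab), (Save), (Restore). -/
inductive Step : Term × Stack → Term × Stack → Prop
  | push (t u : Term) (π : Stack) : Step (.app t u, π) (t, .cons u π)
  | grab (t u : Term) (π : Stack) : Step (.lam t, .cons u π) (t.subst 0 u, π)
  | save (t : Term) (π : Stack) : Step (cc, .cons t π) (t, .cons (.cont π) π)
  | restore (t : Term) (π π' : Stack) : Step (.cont π, .cons t π') (t, π)

/-- Church-style encoding of zero: `λx f. x`. -/
def zeroT : Term := .lam (.lam (.var 1))

/-- Church-style encoding of the successor: `λn x f. f (n x f)`. -/
def succT : Term :=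
  .lam (.lam (.lam (.app (.var 0) (.app (.app (.var 2) (.var 1)) (.var 0)))))

/-- The numeral `n̄ ≡ s̄ⁿ 0̄`. -/
def num : ℕ → Term
  | 0 => zeroT
  | n + 1 => .app succT (num n)

/-- Multi-step evaluation `≻`. -/
def StarStep : Term × Stack → Term × Stack → Prop := Relation.ReflTransGen Step

/-- A history entry: an ∃-position `(m⃗_i, n⃗_i, u, π)`. -/
abbrev Hist := List ℕ × List ℕ × Term × Stack

/-- Winning states of the cumulative game `G²_Φ` for the arithmetical formula
`Φ ≡ ∃x₁∀y₁…∃x_h∀y_h (f(x⃗,y⃗)=0)`.  A state is a pair `⟨P, H⟩` of a set of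
processes and a history.  (Win): some `p ∈ P` reaches `u ⋆ π` for a complete
position `(m⃗_h, n⃗_h, u, π) ∈ H` with `f(m⃗_h, n⃗_h) = 0`.  (Play): some
`p ∈ P` reaches `u ⋆ m̄'·ξ·π` for a position `(m⃗_i, n⃗_i, u, π) ∈ H` of size
`i < h`, and for every Abelard answer `(n', u', π')` the extended state is
winning. -/
inductive W2 (h : ℕ) (f : List ℕ → List ℕ → ℕ) :
    Set (Term × Stack) → Set Hist → Prop
  | win (P : Set (Term × Stack)) (H : Set Hist) (p : Term × Stack)
      (ms ns : List ℕ) (u : Term) (π : Stack) :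
      p ∈ P → (ms, ns, u, π) ∈ H → ms.length = h → ns.length = h →
      StarStep p (u, π) → f ms ns = 0 → W2 h f P H
  | play (P : Set (Term × Stack)) (H : Set Hist) (p : Term × Stack)
      (ms ns : List ℕ) (i : ℕ) (u : Term) (π : Stack) (m' : ℕ) (ξ : Term) :
      p ∈ P → (ms, ns, u, π) ∈ H → ms.length = i → ns.length = i → i < h →
      StarStep p (u, .cons (num m') (.cons ξ π)) →
      (∀ (n' : ℕ) (u' : Term) (π' : Stack),
        W2 h f (P ∪ {(ξ, .cons (num n') (.cons u' π'))})
               (H ∪ {(ms ++ [m'], ns ++ [n'], u', π')})) →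
      W2 h f P H

/-- A pole: a set of processes closed under anti-evaluation. -/
def IsPole (B : Set (Term × Stack)) : Prop :=
  ∀ p p', StarStep p p' → p' ∈ B → p ∈ B

/-- Truth value `S^⊥` of a falsity value `S` w.r.t. a pole `B`. -/
def orth (B : Set (Term × Stack)) (S : Set Stack) : Set Term :=
  {t | ∀ π ∈ S, (t, π) ∈ B}

/-- Falsity value of the relativized arithmetical formula with `k` remaining
blocks of quantifiers and accumulated witnesses `ms`, `ns`:
`FV B f k ms ns = ‖∃ᴺx₁∀ᴺy₁…∃ᴺx_k∀ᴺy_k (f(m⃗·x⃗, n⃗·y⃗) = 0)‖` w.r.t. the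
pole `B`, where `f(e⃗) = 0` is Leibniz equality
`∀W (W(f(e⃗)) ⇒ W(0))`, `∃ᴺx A ≡ ∀Z (∀x ({x} ⇒ A ⇒ Z) ⇒ Z)` and
`∀ᴺy A ≡ ∀y ({y} ⇒ A)`, with `‖{e} ⇒ A‖ = {n̄·π : ⟦e⟧ = n, π ∈ ‖A‖}`. -/
def FV (B : Set (Term × Stack)) (f : List ℕ → List ℕ → ℕ) :
    ℕ → List ℕ → List ℕ → Set Stack
  | 0, ms, ns =>
      {σ | ∃ (F : ℕ → Set Stack) (t : Term) (π : Stack),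
        t ∈ orth B (F (f ms ns)) ∧ π ∈ F 0 ∧ σ = .cons t π}
  | k + 1, ms, ns =>
      {σ | ∃ (S : Set Stack) (t : Term) (π : Stack),
        t ∈ orth B {σ' | ∃ (m : ℕ) (u : Term) (π' : Stack),
          u ∈ orth B {σ'' | ∃ (n : ℕ) (π'' : Stack),
            π'' ∈ FV B f k (ms ++ [m]) (ns ++ [n]) ∧ σ'' = .cons (num n) π''} ∧
          π' ∈ S ∧ σ' = .cons (num m) (.cons u π')} ∧
        π ∈ S ∧ σ = .cons t π}

/-
Induction on winning states, for a fixed pole `B`, under the invariant that Abelard only plays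
refutations: the handle `u·π` of every position of size `i` lies in the falsity value of the
remaining `h - i` blocks. At a (Win) state some process reaches `u ⋆ π` with `u·π ∈ ‖f(m⃗,n⃗) = 0‖`
and `f(m⃗,n⃗) = 0`, so it is in `B`. At a (Play) state where Eloise's move `u ⋆ m̄·ξ·π` is outside
`B`, the fact that `u` realizes the premise `∀x ({x} ⇒ A ⇒ Z)` of the `∃ᴺ` forces `ξ` to fail on
some `n̄·u'·π'` whose tail `u'·π'` refutes the next block; Abelard answers with it, and since the
new process `ξ ⋆ n̄·u'·π'` is outside `B`, the process in `B` found by induction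
belongs to the old state.
-/

lemma exists_eq_cons_of_mem_FV {B : Set (Term × Stack)} {f : List ℕ → List ℕ → ℕ} {k : ℕ}
    {ms ns : List ℕ} {σ : Stack} (hσ : σ ∈ FV B f k ms ns) :
    ∃ u π, σ = .cons u π := by
  cases k <;> obtain ⟨_, u, π, _, _, rfl⟩ := hσ <;> exact ⟨u, π, rfl⟩

lemma mem_of_cons_mem_FV_zero {B : Set (Term × Stack)} {f : List ℕ → List ℕ → ℕ}
    {ms ns : List ℕ} {u : Term} {π : Stack} (hσ : .cons u π ∈ FV B f 0 ms ns)
    (hf : f ms ns = 0) : (u, π) ∈ B := by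
  obtain ⟨F, u, π, hu, hπ, hσ⟩ := hσ
  cases hσ
  exact hu π (hf ▸ hπ)

lemma mem_of_cons_mem_FV_succ {B : Set (Term × Stack)} {f : List ℕ → List ℕ → ℕ} {k : ℕ}
    {ms ns : List ℕ} {u : Term} {π : Stack} (hσ : .cons u π ∈ FV B f (k + 1) ms ns)
    (m : ℕ) {ξ : Term}
    (hξ : ∀ n π', π' ∈ FV B f k (ms ++ [m]) (ns ++ [n]) → (ξ, .cons (num n) π') ∈ B) :
    (u, .cons (num m) (.cons ξ π)) ∈ B := by
  obtain ⟨S, u, π, hu, hπ, hσ⟩ := hσ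
  cases hσ
  refine hu _ ⟨m, ξ, π, ?_, hπ, rfl⟩
  rintro _ ⟨n, π', hπ', rfl⟩
  exact hξ n π' hπ'

def HistRefutes (B : Set (Term × Stack)) (f : List ℕ → List ℕ → ℕ) (h : ℕ) (H : Set Hist) :
    Prop :=
  ∀ ms ns u π, (ms, ns, u, π) ∈ H → Stack.cons u π ∈ FV B f (h - ms.length) ms ns

namespace HistRefutes

variable {B : Set (Term × Stack)} {f : List ℕ → List ℕ → ℕ} {h : ℕ}

lemma singleton {ms ns : List ℕ} {u : Term} {π : Stack}
    (hσ : .cons u π ∈ FV B f (h - ms.length) ms ns) :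
    HistRefutes B f h {(ms, ns, u, π)} := by
  rintro _ _ _ _ ⟨⟩
  exact hσ

lemma union {H H' : Set Hist} (hH : HistRefutes B f h H) (hH' : HistRefutes B f h H') :
    HistRefutes B f h (H ∪ H') := by
  rintro ms ns u π (hmem | hmem)
  exacts [hH ms ns u π hmem, hH' ms ns u π hmem]

end HistRefutes

theorem W2.exists_mem_pole {h : ℕ} {f : List ℕ → List ℕ → ℕ} {B : Set (Term × Stack)}
    (hB : IsPole B) {P : Set (Term × Stack)} {H : Set Hist} (hw : W2 h f P H)
    (hH : HistRefutes B f h H) : ∃ p ∈ P, p ∈ B := by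
  induction hw with
  | win P H p ms ns u π hp hmem hms _ hstep hf =>
    have hσ := hH ms ns u π hmem
    rw [hms, Nat.sub_self] at hσ
    exact ⟨p, hp, hB _ _ hstep (mem_of_cons_mem_FV_zero hσ hf)⟩
  | play P H p ms ns i u π m' ξ hp hmem hms _ hi hstep _ ih =>
    by_cases hmove : (u, .cons (num m') (.cons ξ π)) ∈ B
    · exact ⟨p, hp, hB _ _ hstep hmove⟩
    have hσ := hH ms ns u π hmem
    rw [hms, show h - i = (h - (i + 1)) + 1 by omega] at hσ
    obtain ⟨n', π', hπ', hξ⟩ : ∃ n' π', π' ∈ FV B f (h - (i + 1)) (ms ++ [m']) (ns ++ [n']) ∧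
        (ξ, .cons (num n') π') ∉ B := by
      by_contra! hξ
      exact hmove (mem_of_cons_mem_FV_succ hσ m' hξ)
    obtain ⟨u', π', rfl⟩ := exists_eq_cons_of_mem_FV hπ'
    have hlen : (ms ++ [m']).length = i + 1 := by simp [hms]
    obtain ⟨q, hq | hq, hqB⟩ := ih n' u' π' (hH.union (.singleton (hlen ▸ hπ')))
    · exact ⟨q, hq, hqB⟩
    · exact absurd (Set.mem_singleton_iff.mp hq ▸ hqB) hξ

/-- Adequacy of the game `G²`: if `t` is a winning strategy for `G²_Φ`, where
`Φ ≡ ∃ᴺx₁∀ᴺy₁…∃ᴺx_h∀ᴺy_h (f(x⃗,y⃗)=0)`, then `t` universally realizes `Φ`. -/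
theorem W2_winning_strategy_realizes (h : ℕ) (f : List ℕ → List ℕ → ℕ)
    (t : Term)
    (hwin : ∀ (u : Term) (π : Stack),
      W2 h f {(t, .cons u π)} {([], [], u, π)}) :
    ∀ B : Set (Term × Stack), IsPole B → t ∈ orth B (FV B f h [] []) := by
  intro B hB σ hσ
  obtain ⟨u, π, rfl⟩ := exists_eq_cons_of_mem_FV hσ
  obtain ⟨p, hp, hpB⟩ := (hwin u π).exists_mem_pole hB (.singleton hσ)
  rwa [Set.mem_singleton_iff.mp hp] at hpB
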